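/- Let γ be a p-cycle over ℤ/2ℤ, x ≠ y two vertices of γ, γ' = Glue_{x,y}(γ) the cycle obtained by gluing x and y to a new vertex z, and Γ = z · (Star_γ(x) ∪ Star_γ(y)) the (p+1)-chain obtained by coning the p-simplices of γ containing x or y over z. Then ∂Γ = γ + γ', i.e., Γ is a filling witnessing that γ and γ' are homologous. -/
import Mathlib


attribute [local instance] Classical.propDecidable

/-- The mod-2 simplicial boundary operator on formal sums of finite vertex sets. -/
noncomputable def bdry (V : Type*) [DecidableEq V] :
    (Finset V →₀ ZMod 2) →ₗ[ZMod 2] (Finset V →₀ ZMod 2) :=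
  Finsupp.lsum (ZMod 2) fun σ =>
    LinearMap.toSpanSingleton (ZMod 2) _ (∑ v ∈ σ, Finsupp.single (σ.erase v) (1 : ZMod 2))

/-- Chains supported on the `p`-simplices (sets of `p+1` vertices) of `K`. -/
noncomputable def chainsIn {V : Type*} (K : Set (Finset V)) (p : ℕ) :
    Submodule (ZMod 2) (Finset V →₀ ZMod 2) :=
  Finsupp.supported (ZMod 2) (ZMod 2) {σ | σ ∈ K ∧ σ.card = p + 1}

noncomputable def cyclesIn {V : Type*} [DecidableEq V] (K : Set (Finset V)) (p : ℕ) :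
    Submodule (ZMod 2) (Finset V →₀ ZMod 2) :=
  chainsIn K p ⊓ LinearMap.ker (bdry V)

noncomputable def bdriesIn {V : Type*} [DecidableEq V] (K : Set (Finset V)) (p : ℕ) :
    Submodule (ZMod 2) (Finset V →₀ ZMod 2) :=
  Submodule.map (bdry V) (chainsIn K (p + 1))

/-- The `p`-th persistent Betti number of `K ⊆ L`: the rank of the image of
`H_p(K) → H_p(L)`, computed as `Z_p(K) / (Z_p(K) ∩ B_p(L))`. -/
noncomputable def pBetti {V : Type*} [DecidableEq V] (K L : Set (Finset V)) (p : ℕ) : Cardinal :=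
  Module.rank (ZMod 2) ↥(Submodule.map (bdriesIn L p).mkQ (cyclesIn K p))

noncomputable def betti {V : Type*} [DecidableEq V] (K : Set (Finset V)) (p : ℕ) : Cardinal :=
  pBetti K K p

/-- Pushforward of a `p`-chain along a vertex map; degenerate simplices are dropped and
coinciding images cancel mod 2. -/
noncomputable def pushChain {V W : Type*} [DecidableEq V] [DecidableEq W]
    (q : V → W) (p : ℕ) (c : Finset V →₀ ZMod 2) : Finset W →₀ ZMod 2 :=
  Finsupp.filter (fun τ => τ.card = p + 1)
    (Finsupp.mapDomain (fun σ : Finset V => σ.image q) c)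

/-- Gluing vertices `x` and `y` of a `p`-chain to a new vertex `z`. -/
noncomputable def glueChain {V : Type*} [DecidableEq V] (x y z : V) (p : ℕ)
    (c : Finset V →₀ ZMod 2) : Finset V →₀ ZMod 2 :=
  pushChain (fun v => if v = x ∨ v = y then z else v) p c

/-- The star of a vertex in a chain: the simplices of the chain containing it. -/
noncomputable def starChain {V : Type*} (x : V) (c : Finset V →₀ ZMod 2) :
    Finset V →₀ ZMod 2 :=
  Finsupp.filter (fun σ => x ∈ σ) c

/-- The cone over a chain with apex `z`. -/
noncomputable def coneChain {V : Type*} [DecidableEq V] (z : V) (c : Finset V →₀ ZMod 2) :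
    Finset V →₀ ZMod 2 :=
  Finsupp.mapDomain (insert z) c

set_option linter.unusedSectionVars false

section AuxLemmas

variable {V : Type*} [DecidableEq V]

lemma bdry_single (σ : Finset V) (a : ZMod 2) :
    bdry V (Finsupp.single σ a) = ∑ v ∈ σ, Finsupp.single (σ.erase v) a := by
  rw [bdry, Finsupp.lsum_single, LinearMap.toSpanSingleton_apply, Finset.smul_sum]
  simp [Finsupp.smul_single]

lemma bdry_sum_support (c : Finset V →₀ ZMod 2) :
    bdry V c = ∑ σ ∈ c.support, ∑ v ∈ σ, Finsupp.single (σ.erase v) (c σ) := by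
  conv_lhs => rw [← Finsupp.sum_single c, Finsupp.sum, map_sum]
  exact Finset.sum_congr rfl fun σ _ => bdry_single ..

lemma support_bdry_subset (c : Finset V →₀ ZMod 2) :
    ∀ τ ∈ (bdry V c).support, ∃ σ ∈ c.support, τ ⊆ σ := by
  intro τ hτ
  rw [bdry_sum_support] at hτ
  obtain ⟨σ, hσ, hτ2⟩ := Finsupp.mem_support_finset_sum τ hτ
  obtain ⟨v, _, hτ3⟩ := Finsupp.mem_support_finset_sum τ hτ2
  have := Finset.mem_singleton.1 (Finsupp.support_single_subset hτ3)
  exact ⟨σ, hσ, this ▸ Finset.erase_subset v σ⟩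

lemma addself (a : Finset V →₀ ZMod 2) : a + a = 0 := by
  ext t
  have : ∀ u : ZMod 2, u + u = 0 := by decide
  simp [this]

lemma cone_bdry (z : V) (c : Finset V →₀ ZMod 2) (hz : ∀ σ ∈ c.support, z ∉ σ) :
    bdry V (coneChain z c) = c + coneChain z (bdry V c) := by
  have h1 : coneChain z c = ∑ σ ∈ c.support, Finsupp.single (insert z σ) (c σ) := by
    rw [coneChain]
    conv_lhs => rw [← Finsupp.sum_single c, Finsupp.sum, Finsupp.mapDomain_finset_sum]
    exact Finset.sum_congr rfl fun σ _ => Finsupp.mapDomain_single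
  calc bdry V (coneChain z c)
      = ∑ σ ∈ c.support,
        (Finsupp.single σ (c σ) + ∑ v ∈ σ, Finsupp.single (insert z (σ.erase v)) (c σ)) := by
        rw [h1, map_sum]
        refine Finset.sum_congr rfl fun σ hσ => ?_
        rw [bdry_single, Finset.sum_insert (hz σ hσ), Finset.erase_insert (hz σ hσ)]
        congr 1
        refine Finset.sum_congr rfl fun v hv => ?_
        rw [Finset.erase_insert_of_ne (fun hzv : z = v => hz σ hσ (hzv ▸ hv))]
    _ = c + coneChain z (bdry V c) := by
        rw [Finset.sum_add_distrib]
        congr 1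
        · exact Finsupp.sum_single c
        · rw [coneChain, bdry_sum_support c, Finsupp.mapDomain_finset_sum]
          refine Finset.sum_congr rfl fun σ _ => ?_
          rw [Finsupp.mapDomain_finset_sum]
          exact Finset.sum_congr rfl fun v _ => Finsupp.mapDomain_single.symm

lemma pushChain_finset_sum {W : Type*} [DecidableEq W] (q : V → W) (p : ℕ) {ι : Type*}
    (s : Finset ι) (f : ι → Finset V →₀ ZMod 2) :
    pushChain q p (∑ i ∈ s, f i) = ∑ i ∈ s, pushChain q p (f i) := by
  unfold pushChain
  rw [Finsupp.mapDomain_finset_sum, Finsupp.filter_sum]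

lemma glue_single_notmem (x y z : V) (p : ℕ) (σ : Finset V) (a : ZMod 2)
    (hx : x ∉ σ) (hy : y ∉ σ) (hcard : σ.card = p + 1) :
    glueChain x y z p (Finsupp.single σ a) = Finsupp.single σ a := by
  have himg : σ.image (fun v => if v = x ∨ v = y then z else v) = σ := by
    rw [Finset.image_congr (g := id) (fun v hv => by
      simp only [id]
      rw [if_neg]
      rintro (rfl | rfl)
      · exact hx hv
      · exact hy hv), Finset.image_id]
  rw [glueChain, pushChain, Finsupp.mapDomain_single, himg]
  exact Finsupp.filter_single_of_pos _ hcard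

lemma glue_single_x (x y z : V) (p : ℕ) (σ : Finset V) (a : ZMod 2)
    (hx : x ∈ σ) (hy : y ∉ σ) (hz : z ∉ σ) (hcard : σ.card = p + 1) :
    glueChain x y z p (Finsupp.single σ a) =
      Finsupp.single (insert z (σ.erase x)) a := by
  have himg : σ.image (fun v => if v = x ∨ v = y then z else v)
      = insert z (σ.erase x) := by
    conv_lhs => rw [← Finset.insert_erase hx]
    rw [Finset.image_insert, if_pos (Or.inl rfl)]
    congr 1
    rw [Finset.image_congr (g := id) (fun v hv => by
      simp only [id]
      rw [if_neg]
      rintro (rfl | rfl)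
      · exact (Finset.mem_erase.1 hv).1 rfl
      · exact hy (Finset.mem_erase.1 hv).2), Finset.image_id]
  have hcard2 : (insert z (σ.erase x)).card = p + 1 := by
    rw [Finset.card_insert_of_notMem (fun h => hz (Finset.mem_of_mem_erase h)),
      Finset.card_erase_of_mem hx, hcard]
    omega
  rw [glueChain, pushChain, Finsupp.mapDomain_single, himg]
  exact Finsupp.filter_single_of_pos _ hcard2

lemma glue_single_y (x y z : V) (p : ℕ) (σ : Finset V) (a : ZMod 2)
    (hx : x ∉ σ) (hy : y ∈ σ) (hz : z ∉ σ) (hcard : σ.card = p + 1) :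
    glueChain x y z p (Finsupp.single σ a) =
      Finsupp.single (insert z (σ.erase y)) a := by
  have himg : σ.image (fun v => if v = x ∨ v = y then z else v)
      = insert z (σ.erase y) := by
    conv_lhs => rw [← Finset.insert_erase hy]
    rw [Finset.image_insert, if_pos (Or.inr rfl)]
    congr 1
    rw [Finset.image_congr (g := id) (fun v hv => by
      simp only [id]
      rw [if_neg]
      rintro (rfl | rfl)
      · exact hx (Finset.mem_erase.1 hv).2
      · exact (Finset.mem_erase.1 hv).1 rfl), Finset.image_id]
  have hcard2 : (insert z (σ.erase y)).card = p + 1 := by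
    rw [Finset.card_insert_of_notMem (fun h => hz (Finset.mem_of_mem_erase h)),
      Finset.card_erase_of_mem hy, hcard]
    omega
  rw [glueChain, pushChain, Finsupp.mapDomain_single, himg]
  exact Finsupp.filter_single_of_pos _ hcard2

lemma glue_single_both (x y z : V) (p : ℕ) (σ : Finset V) (a : ZMod 2)
    (hx : x ∈ σ) (hy : y ∈ σ) (hz : z ∉ σ) (hxy : x ≠ y) (hcard : σ.card = p + 1) :
    glueChain x y z p (Finsupp.single σ a) = 0 := by
  have hyx : y ∈ σ.erase x := Finset.mem_erase.2 ⟨fun h => hxy h.symm, hy⟩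
  have hσ : σ = insert x (insert y ((σ.erase x).erase y)) := by
    rw [Finset.insert_erase hyx, Finset.insert_erase hx]
  have himg : σ.image (fun v => if v = x ∨ v = y then z else v)
      = insert z ((σ.erase x).erase y) := by
    conv_lhs => rw [hσ]
    rw [Finset.image_insert, Finset.image_insert, if_pos (Or.inl rfl),
      if_pos (Or.inr rfl), Finset.insert_idem]
    congr 1
    rw [Finset.image_congr (g := id) (fun v hv => by
      simp only [id]
      have h1 := Finset.mem_erase.1 hv
      have h2 := Finset.mem_erase.1 h1.2
      rw [if_neg]
      rintro (rfl | rfl)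
      · exact h2.1 rfl
      · exact h1.1 rfl), Finset.image_id]
  have hp : 1 ≤ p := by
    have h2 : 1 < σ.card := Finset.one_lt_card.2 ⟨x, hx, y, hy, hxy⟩
    omega
  have hcard2 : (insert z ((σ.erase x).erase y)).card = p := by
    rw [Finset.card_insert_of_notMem
        (fun h => hz (Finset.mem_of_mem_erase (Finset.mem_of_mem_erase h))),
      Finset.card_erase_of_mem hyx, Finset.card_erase_of_mem hx, hcard]
    omega
  rw [glueChain, pushChain, Finsupp.mapDomain_single, himg]
  exact Finsupp.filter_single_of_neg _ (by rw [hcard2]; omega)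

lemma filter_bdry_single_x (x y : V) (σ : Finset V) (a : ZMod 2)
    (hx : x ∈ σ) (hy : y ∉ σ) :
    Finsupp.filter (fun τ => x ∉ τ ∧ y ∉ τ) (bdry V (Finsupp.single σ a)) =
      Finsupp.single (σ.erase x) a := by
  rw [bdry_single, Finsupp.filter_sum]
  have : ∀ v ∈ σ, Finsupp.filter (fun τ => x ∉ τ ∧ y ∉ τ) (Finsupp.single (σ.erase v) a)
      = if v = x then Finsupp.single (σ.erase x) a else 0 := by
    intro v hv
    by_cases hvx : v = x
    · subst hvx
      rw [if_pos rfl]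
      exact Finsupp.filter_single_of_pos _
        ⟨Finset.notMem_erase v σ, fun h => hy (Finset.mem_of_mem_erase h)⟩
    · rw [if_neg hvx]
      exact Finsupp.filter_single_of_neg _
        (fun h => h.1 (Finset.mem_erase.2 ⟨fun he => hvx he.symm, hx⟩))
  rw [Finset.sum_congr rfl this, Finset.sum_ite_eq' σ x
    (fun _ => Finsupp.single (σ.erase x) a), if_pos hx]

lemma filter_bdry_single_y (x y : V) (σ : Finset V) (a : ZMod 2)
    (hx : x ∉ σ) (hy : y ∈ σ) :
    Finsupp.filter (fun τ => x ∉ τ ∧ y ∉ τ) (bdry V (Finsupp.single σ a)) =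
      Finsupp.single (σ.erase y) a := by
  rw [bdry_single, Finsupp.filter_sum]
  have : ∀ v ∈ σ, Finsupp.filter (fun τ => x ∉ τ ∧ y ∉ τ) (Finsupp.single (σ.erase v) a)
      = if v = y then Finsupp.single (σ.erase y) a else 0 := by
    intro v hv
    by_cases hvy : v = y
    · subst hvy
      rw [if_pos rfl]
      exact Finsupp.filter_single_of_pos _
        ⟨fun h => hx (Finset.mem_of_mem_erase h), Finset.notMem_erase v σ⟩
    · rw [if_neg hvy]
      exact Finsupp.filter_single_of_neg _
        (fun h => h.2 (Finset.mem_erase.2 ⟨fun he => hvy he.symm, hy⟩))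
  rw [Finset.sum_congr rfl this, Finset.sum_ite_eq' σ y
    (fun _ => Finsupp.single (σ.erase y) a), if_pos hy]

lemma filter_bdry_single_both (x y : V) (σ : Finset V) (a : ZMod 2)
    (hx : x ∈ σ) (hy : y ∈ σ) (hxy : x ≠ y) :
    Finsupp.filter (fun τ => x ∉ τ ∧ y ∉ τ) (bdry V (Finsupp.single σ a)) = 0 := by
  rw [bdry_single, Finsupp.filter_sum]
  refine Finset.sum_eq_zero fun v hv => ?_
  refine Finsupp.filter_single_of_neg _ (fun h => ?_)
  by_cases hvx : v = x
  · exact h.2 (Finset.mem_erase.2 ⟨fun he => hxy (hvx ▸ he).symm, hy⟩)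
  · exact h.1 (Finset.mem_erase.2 ⟨fun he => hvx he.symm, hx⟩)

lemma glueChain_finset_sum (x y z : V) (p : ℕ) {ι : Type*}
    (s : Finset ι) (f : ι → Finset V →₀ ZMod 2) :
    glueChain x y z p (∑ i ∈ s, f i) = ∑ i ∈ s, glueChain x y z p (f i) := by
  unfold glueChain
  exact pushChain_finset_sum _ p s f

lemma glueChain_add (x y z : V) (p : ℕ) (a b : Finset V →₀ ZMod 2) :
    glueChain x y z p (a + b) = glueChain x y z p a + glueChain x y z p b := by
  unfold glueChain pushChain
  rw [Finsupp.mapDomain_add, Finsupp.filter_add]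

lemma glue_eq_cone_filter (x y z : V) (p : ℕ) (S : Finset V →₀ ZMod 2) (hxy : x ≠ y)
    (hsupp : ∀ σ ∈ S.support, (x ∈ σ ∨ y ∈ σ) ∧ z ∉ σ ∧ σ.card = p + 1) :
    glueChain x y z p S =
      coneChain z (Finsupp.filter (fun τ => x ∉ τ ∧ y ∉ τ) (bdry V S)) := by
  have hrepr : S = ∑ σ ∈ S.support, Finsupp.single σ (S σ) := (Finsupp.sum_single S).symm
  conv_lhs => rw [hrepr]
  conv_rhs => rw [hrepr]
  rw [glueChain_finset_sum, map_sum, Finsupp.filter_sum, coneChain,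
    Finsupp.mapDomain_finset_sum]
  refine Finset.sum_congr rfl fun σ hσ => ?_
  obtain ⟨hP, hzσ, hcard⟩ := hsupp σ hσ
  by_cases hxσ : x ∈ σ <;> by_cases hyσ : y ∈ σ
  · rw [glue_single_both x y z p σ _ hxσ hyσ hzσ hxy hcard,
      filter_bdry_single_both x y σ _ hxσ hyσ hxy, Finsupp.mapDomain_zero]
  · rw [glue_single_x x y z p σ _ hxσ hyσ hzσ hcard,
      filter_bdry_single_x x y σ _ hxσ hyσ, Finsupp.mapDomain_single]
  · rw [glue_single_y x y z p σ _ hxσ hyσ hzσ hcard,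
      filter_bdry_single_y x y σ _ hxσ hyσ, Finsupp.mapDomain_single]
  · exact absurd hP (by simp [hxσ, hyσ])

lemma glue_eq_self (x y z : V) (p : ℕ) (T : Finset V →₀ ZMod 2)
    (hsupp : ∀ σ ∈ T.support, x ∉ σ ∧ y ∉ σ ∧ σ.card = p + 1) :
    glueChain x y z p T = T := by
  have hrepr : T = ∑ σ ∈ T.support, Finsupp.single σ (T σ) := (Finsupp.sum_single T).symm
  conv_lhs => rw [hrepr]
  rw [glueChain_finset_sum]
  conv_rhs => rw [hrepr]
  refine Finset.sum_congr rfl fun σ hσ => ?_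
  obtain ⟨h1, h2, h3⟩ := hsupp σ hσ
  exact glue_single_notmem x y z p σ _ h1 h2 h3


end AuxLemmas

/-- the cone with apex `z` over `Star_γ(x) ∪ Star_γ(y)` is a filling of
`γ + Glue_{x,y}(γ)`. -/
theorem bdry_cone_star_eq {V : Type*} [DecidableEq V] (p : ℕ) (c : Finset V →₀ ZMod 2)
    (x y z : V)
    (hchain : ∀ σ ∈ c.support, σ.card = p + 1) (hcycle : bdry V c = 0)
    (hx : ∃ σ ∈ c.support, x ∈ σ) (hy : ∃ σ ∈ c.support, y ∈ σ) (hxy : x ≠ y)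
    (hz : ∀ σ ∈ c.support, z ∉ σ) :
    bdry V (coneChain z (Finsupp.filter (fun σ => x ∈ σ ∨ y ∈ σ) c)) =
      c + glueChain x y z p c := by
  classical
  set S := Finsupp.filter (fun σ => x ∈ σ ∨ y ∈ σ) c with hSdef
  set T := Finsupp.filter (fun σ => ¬ (x ∈ σ ∨ y ∈ σ)) c with hTdef
  have hST : S + T = c := Finsupp.filter_pos_add_filter_neg c _
  have hSsupp : ∀ σ ∈ S.support, (x ∈ σ ∨ y ∈ σ) ∧ z ∉ σ ∧ σ.card = p + 1 := by
    intro σ hσ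
    rw [hSdef, Finsupp.support_filter, Finset.mem_filter] at hσ
    exact ⟨hσ.2, hz σ hσ.1, hchain σ hσ.1⟩
  have hTsupp : ∀ σ ∈ T.support, ¬ (x ∈ σ ∨ y ∈ σ) ∧ σ.card = p + 1 := by
    intro σ hσ
    rw [hTdef, Finsupp.support_filter, Finset.mem_filter] at hσ
    exact ⟨hσ.2, hchain σ hσ.1⟩
  have h1 : bdry V (coneChain z S) = S + coneChain z (bdry V S) :=
    cone_bdry z S (fun σ h => (hSsupp σ h).2.1)
  have h2 : bdry V S = bdry V T := by
    have h0 : bdry V S + bdry V T = 0 := by rw [← map_add, hST, hcycle]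
    calc bdry V S = bdry V S + (bdry V S + bdry V T) := by rw [h0, add_zero]
      _ = (bdry V S + bdry V S) + bdry V T := by rw [add_assoc]
      _ = bdry V T := by rw [addself, zero_add]
  have h3 : Finsupp.filter (fun τ => x ∉ τ ∧ y ∉ τ) (bdry V S) = bdry V S := by
    rw [h2]
    refine (Finsupp.filter_eq_self_iff _ _).2 fun τ hτ => ?_
    obtain ⟨σ, hσ, hsub⟩ := support_bdry_subset T τ (Finsupp.mem_support_iff.2 hτ)
    have hσT := (hTsupp σ hσ).1
    exact ⟨fun hxτ => hσT (Or.inl (hsub hxτ)), fun hyτ => hσT (Or.inr (hsub hyτ))⟩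
  have h4 : glueChain x y z p S =
      coneChain z (Finsupp.filter (fun τ => x ∉ τ ∧ y ∉ τ) (bdry V S)) :=
    glue_eq_cone_filter x y z p S hxy hSsupp
  have h5 : glueChain x y z p T = T :=
    glue_eq_self x y z p T (fun σ hσ => by
      have h := hTsupp σ hσ
      exact ⟨fun hc => h.1 (Or.inl hc), fun hc => h.1 (Or.inr hc), h.2⟩)
  have h6 : glueChain x y z p c = glueChain x y z p S + T := by
    conv_lhs => rw [← hST]
    rw [glueChain_add, h5]
  rw [h1, ← h3, ← h4, h6]
  conv_rhs => rw [← hST]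
  have : S + T + (glueChain x y z p S + T)
      = S + glueChain x y z p S + (T + T) := by abel
  rw [this, addself, add_zero]
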